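/- arXiv:1710.05283 — 3 statements merged into one kernel-verified Lean document; each statement's English description precedes it below -/
import Mathlib

section
/- Let g(·;θ₁,θ₂,ρ) be the bivariate exponential model pmf on {0,1}². For every B > 0 there exist δ, ε > 0 such that for all θ₁,θ₂,ϑ₁,ϑ₂ ∈ [-2B,2B] and ρ,ϱ ∈ [-B,B]: if |θ₁-ϑ₁| + |θ₂-ϑ₂| + |ρ-ϱ| > δ, then E_{Y∼g(·;θ₁,θ₂,ρ)}[log g(Y;θ₁,θ₂,ρ)] - E_{Y∼g(·;θ₁,θ₂,ρ)}[log g(Y;ϑ₁,ϑ₂,ϱ)] > ε. -/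
/-!
The Kullback–Leibler divergence between two members of the model is continuous in the pair of
parameters, and by Gibbs' inequality it vanishes only when the two pmfs coincide, which forces
the parameters to coincide (the ratios `g(a) / g(0,0)` recover `θ₁`, `θ₂` and `θ₁ + θ₂ + ρ`).
Pairs of parameters in the compact box at least a fixed distance apart form a compact set on which
the divergence is positive, so it has a positive minimum there.
-/

/-- The pmf of the bivariate exponential network model with interaction effect. -/
noncomputable def expPMF (a₁ a₂ θ₁ θ₂ ρ : ℝ) : ℝ :=
  Real.exp (θ₁ * a₁ + θ₂ * a₂ + ρ * a₁ * a₂) /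
    (1 + Real.exp θ₁ + Real.exp θ₂ + Real.exp (θ₁ + θ₂ + ρ))

noncomputable section

open Real Finset InformationTheory

theorem mul_log_sub_log_eq_mul_klFun_add {p q : ℝ} (hp : 0 < p) (hq : 0 < q) :
    p * (log p - log q) = q * klFun (p / q) + (p - q) := by
  rw [klFun_apply, log_div hp.ne' hq.ne']
  field_simp
  ring

theorem sum_mul_log_sub_log_pos {ι : Type*} [Fintype ι] {p q : ι → ℝ}
    (hp : ∀ i, 0 < p i) (hq : ∀ i, 0 < q i) (hsum : ∑ i, p i = ∑ i, q i) (hne : p ≠ q) :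
    0 < ∑ i, p i * (log (p i) - log (q i)) := by
  have hratio : ∀ i, 0 ≤ p i / q i := fun i => (div_pos (hp i) (hq i)).le
  obtain ⟨i, hi⟩ := Function.ne_iff.mp hne
  have hkl_ne : klFun (p i / q i) ≠ 0 := fun h =>
    hi ((div_eq_one_iff_eq (hq i).ne').mp ((klFun_eq_zero_iff (hratio i)).mp h))
  simp_rw [mul_log_sub_log_eq_mul_klFun_add (hp _) (hq _)]
  rw [sum_add_distrib, sum_sub_distrib, hsum, sub_self, add_zero]
  refine sum_pos' (fun j _ => mul_nonneg (hq j).le (klFun_nonneg (hratio j))) ⟨i, mem_univ i, ?_⟩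
  exact mul_pos (hq i) ((klFun_nonneg (hratio i)).lt_of_ne' hkl_ne)

theorem IsCompact.exists_pos_lt_of_le_dist {X : Type*} [PseudoMetricSpace X] {s : Set X}
    (hs : IsCompact s) {f : X → X → ℝ} (hf : ContinuousOn (Function.uncurry f) (s ×ˢ s))
    (hpos : ∀ x ∈ s, ∀ y ∈ s, x ≠ y → 0 < f x y) {δ : ℝ} (hδ : 0 < δ) :
    ∃ ε > 0, ∀ x ∈ s, ∀ y ∈ s, δ ≤ dist x y → ε < f x y := by
  set K := (s ×ˢ s) ∩ {p : X × X | δ ≤ dist p.1 p.2}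
  have hK : IsCompact K := (hs.prod hs).inter_right (isClosed_le continuous_const continuous_dist)
  have hKpos : ∀ p ∈ K, 0 < Function.uncurry f p := by
    rintro ⟨x, y⟩ ⟨⟨hx, hy⟩, hxy⟩
    refine hpos x hx y hy ?_
    rintro rfl
    exact (hδ.trans_le hxy).ne' (dist_self x)
  obtain ⟨a, ha, hle⟩ := hK.exists_forall_le' (hf.mono Set.inter_subset_left) hKpos
  exact ⟨a / 2, half_pos ha, fun x hx y hy hxy =>
    (half_lt_self ha).trans_le (hle (x, y) ⟨⟨hx, hy⟩, hxy⟩)⟩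

/-- The pmf `g(·; θ₁, θ₂, ρ)` on `{0,1}²`, with the parameters packed as `x = (θ₁, θ₂, ρ)`. -/
def expModel (x : ℝ × ℝ × ℝ) (a : Fin 2 × Fin 2) : ℝ :=
  expPMF a.1 a.2 x.1 x.2.1 x.2.2

theorem expPMF_pos (a₁ a₂ θ₁ θ₂ ρ : ℝ) : 0 < expPMF a₁ a₂ θ₁ θ₂ ρ := by
  unfold expPMF
  positivity

theorem expPMF_div_expPMF_zero_zero (a₁ a₂ θ₁ θ₂ ρ : ℝ) :
    expPMF a₁ a₂ θ₁ θ₂ ρ / expPMF 0 0 θ₁ θ₂ ρ = exp (θ₁ * a₁ + θ₂ * a₂ + ρ * a₁ * a₂) := by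
  have hZ : 0 < 1 + exp θ₁ + exp θ₂ + exp (θ₁ + θ₂ + ρ) := by positivity
  simp only [expPMF, mul_zero, add_zero, exp_zero]
  field_simp

theorem expModel_pos (x : ℝ × ℝ × ℝ) (a : Fin 2 × Fin 2) : 0 < expModel x a :=
  expPMF_pos _ _ _ _ _

theorem sum_expModel (x : ℝ × ℝ × ℝ) : ∑ a, expModel x a = 1 := by
  have hZ : 0 < 1 + exp x.1 + exp x.2.1 + exp (x.1 + x.2.1 + x.2.2) := by positivity
  simp only [expModel, expPMF, Fintype.sum_prod_type, Fin.sum_univ_two, Fin.val_zero,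
    Fin.val_one, Nat.cast_zero, Nat.cast_one, mul_zero, mul_one, add_zero, zero_add, exp_zero]
  field_simp
  ring

theorem expModel_injective : Function.Injective expModel := by
  rintro ⟨θ₁, θ₂, ρ⟩ ⟨ϑ₁, ϑ₂, ϱ⟩ h
  have h₀ : expPMF 0 0 θ₁ θ₂ ρ = expPMF 0 0 ϑ₁ ϑ₂ ϱ := by
    simpa [expModel] using congrFun h (0, 0)
  have hratio (a : Fin 2 × Fin 2) :
      exp (θ₁ * a.1 + θ₂ * a.2 + ρ * a.1 * a.2) = exp (ϑ₁ * a.1 + ϑ₂ * a.2 + ϱ * a.1 * a.2) := by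
    rw [← expPMF_div_expPMF_zero_zero, ← expPMF_div_expPMF_zero_zero]
    exact congrArg₂ (· / ·) (congrFun h a) h₀
  have h₁ := hratio (1, 0)
  have h₂ := hratio (0, 1)
  have h₃ := hratio (1, 1)
  simp only [exp_eq_exp, Fin.val_zero, Fin.val_one, Nat.cast_zero, Nat.cast_one, mul_zero,
    mul_one, add_zero, zero_add] at h₁ h₂ h₃
  simp only [Prod.mk.injEq]
  exact ⟨h₁, h₂, by linarith⟩

@[fun_prop]
theorem continuous_expModel (a : Fin 2 × Fin 2) : Continuous fun x => expModel x a := by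
  unfold expModel expPMF
  exact Continuous.div (by fun_prop) (by fun_prop) fun x => by positivity

/-- The Kullback–Leibler divergence `KL(g(·; x) ‖ g(·; y))`. -/
def expKL (x y : ℝ × ℝ × ℝ) : ℝ :=
  ∑ a, expModel x a * (log (expModel x a) - log (expModel y a))

theorem continuous_expKL : Continuous (Function.uncurry expKL) := by
  unfold expKL
  fun_prop (disch := exact fun _ => (expModel_pos _ _).ne')

theorem expKL_pos {x y : ℝ × ℝ × ℝ} (hxy : x ≠ y) : 0 < expKL x y :=
  sum_mul_log_sub_log_pos (expModel_pos x) (expModel_pos y)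
    (by rw [sum_expModel, sum_expModel]) (expModel_injective.ne hxy)

end

theorem stmt_7_general (B : ℝ) :
    ∃ δ ε : ℝ, 0 < δ ∧ 0 < ε ∧
      ∀ θ₁ θ₂ ϑ₁ ϑ₂ ρ ϱ : ℝ,
        θ₁ ∈ Set.Icc (-2 * B) (2 * B) → θ₂ ∈ Set.Icc (-2 * B) (2 * B) →
        ϑ₁ ∈ Set.Icc (-2 * B) (2 * B) → ϑ₂ ∈ Set.Icc (-2 * B) (2 * B) →
        ρ ∈ Set.Icc (-B) B → ϱ ∈ Set.Icc (-B) B →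
        δ < |θ₁ - ϑ₁| + |θ₂ - ϑ₂| + |ρ - ϱ| →
        ε < (∑ a : Fin 2 × Fin 2,
              expPMF (a.1 : ℝ) (a.2 : ℝ) θ₁ θ₂ ρ *
                Real.log (expPMF (a.1 : ℝ) (a.2 : ℝ) θ₁ θ₂ ρ)) -
            (∑ a : Fin 2 × Fin 2,
              expPMF (a.1 : ℝ) (a.2 : ℝ) θ₁ θ₂ ρ *
                Real.log (expPMF (a.1 : ℝ) (a.2 : ℝ) ϑ₁ ϑ₂ ϱ)) := by
  have hbox : IsCompact (Set.Icc (-2 * B) (2 * B) ×ˢ Set.Icc (-2 * B) (2 * B) ×ˢ Set.Icc (-B) B) :=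
    isCompact_Icc.prod (isCompact_Icc.prod isCompact_Icc)
  obtain ⟨ε, hε, hsep⟩ := hbox.exists_pos_lt_of_le_dist continuous_expKL.continuousOn
    (fun x _ y _ => expKL_pos) one_pos
  refine ⟨3, ε, three_pos, hε, fun θ₁ θ₂ ϑ₁ ϑ₂ ρ ϱ h₁ h₂ h₃ h₄ h₅ h₆ hfar => ?_⟩
  -- the sup distance on `ℝ × ℝ × ℝ` is at least a third of the `ℓ¹` distance
  have hdist : 1 ≤ dist (θ₁, θ₂, ρ) (ϑ₁, ϑ₂, ϱ) := by
    simp only [Prod.dist_eq, Real.dist_eq]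
    by_contra! h
    simp only [max_lt_iff] at h
    linarith
  rw [← Finset.sum_sub_distrib]
  simp_rw [← mul_sub]
  exact hsep _ ⟨h₁, h₂, h₅⟩ _ ⟨h₃, h₄, h₆⟩ hdist

/-- Uniform separation: parameters that are `δ`-separated in `ℓ¹` distance have
KL divergence bounded below by `ε` over the compact parameter set. -/
theorem stmt_7 (B : ℝ) (hB : 0 < B) :
    ∃ δ ε : ℝ, 0 < δ ∧ 0 < ε ∧
      ∀ θ₁ θ₂ ϑ₁ ϑ₂ ρ ϱ : ℝ,
        θ₁ ∈ Set.Icc (-2 * B) (2 * B) → θ₂ ∈ Set.Icc (-2 * B) (2 * B) →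
        ϑ₁ ∈ Set.Icc (-2 * B) (2 * B) → ϑ₂ ∈ Set.Icc (-2 * B) (2 * B) →
        ρ ∈ Set.Icc (-B) B → ϱ ∈ Set.Icc (-B) B →
        δ < |θ₁ - ϑ₁| + |θ₂ - ϑ₂| + |ρ - ϱ| →
        ε < (∑ a : Fin 2 × Fin 2,
              expPMF (a.1 : ℝ) (a.2 : ℝ) θ₁ θ₂ ρ *
                Real.log (expPMF (a.1 : ℝ) (a.2 : ℝ) θ₁ θ₂ ρ)) -
            (∑ a : Fin 2 × Fin 2,
              expPMF (a.1 : ℝ) (a.2 : ℝ) θ₁ θ₂ ρ *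
                Real.log (expPMF (a.1 : ℝ) (a.2 : ℝ) ϑ₁ ϑ₂ ϱ)) :=
  stmt_7_general B
end

section
/- Let (Y_{ij})_{i<j≤n} be independent Bernoulli random variables with P(Y_{ij} = 1) ≤ p for all i < j. Fix M ⊆ {1,...,n} with |M| = k ≥ 2, let Z = Σ_{i<j∈M} Y_{ij}, and let u > 0 with w := 2u/(k(k-1)) satisfying w ≤ 1/4 and w ≥ e³·p. Then P(Z ≥ u) ≤ exp(-2u). -/
/-!
Chernoff's method with the crude bound `1 + x ≤ exp x` on the moment generating function of each
edge indicator: for `t ≥ 0` and `N` pairs,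
`P(Z ≥ u) ≤ exp (-t u + N (eᵗ - 1) q)`. Taking `eᵗ = w / q` makes `N (eᵗ - 1) q ≤ N w ≤ u`,
while `w ≥ e³ q` gives `t ≥ 3`, so the exponent is at most `-3u + u = -2u`.
-/

open MeasureTheory ProbabilityTheory Real Finset

section ZeroOne

variable {Ω : Type*} {mΩ : MeasurableSpace Ω} {μ : Measure Ω} {X : Ω → ℝ}

lemma exp_mul_eq_of_zero_or_one (h01 : ∀ ω, X ω = 0 ∨ X ω = 1) (t : ℝ) :
    (fun ω ↦ exp (t * X ω)) = fun ω ↦ 1 + (exp t - 1) * {ω | X ω = 1}.indicator 1 ω := by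
  funext ω
  rcases h01 ω with h | h <;> simp [h]

variable [IsProbabilityMeasure μ]

lemma integrable_exp_mul_of_zero_or_one (hX : Measurable X) (h01 : ∀ ω, X ω = 0 ∨ X ω = 1)
    (t : ℝ) : Integrable (fun ω ↦ exp (t * X ω)) μ := by
  rw [exp_mul_eq_of_zero_or_one h01]
  exact (integrable_const 1).add
    (((integrable_const 1).indicator (hX (measurableSet_singleton 1))).const_mul _)

lemma mgf_eq_of_zero_or_one (hX : Measurable X) (h01 : ∀ ω, X ω = 0 ∨ X ω = 1) (t : ℝ) :
    mgf X μ t = 1 + (exp t - 1) * μ.real {ω | X ω = 1} := by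
  have hms : MeasurableSet {ω | X ω = 1} := hX (measurableSet_singleton 1)
  rw [mgf, exp_mul_eq_of_zero_or_one h01, integral_add (integrable_const 1)
    (((integrable_const 1).indicator hms).const_mul _), integral_const_mul,
    integral_indicator_one hms]
  simp

lemma mgf_le_exp_of_zero_or_one (hX : Measurable X) (h01 : ∀ ω, X ω = 0 ∨ X ω = 1)
    {q t : ℝ} (hq : μ.real {ω | X ω = 1} ≤ q) (ht : 0 ≤ t) :
    mgf X μ t ≤ exp ((exp t - 1) * q) := by
  have hexp : 0 ≤ exp t - 1 := by linarith [one_le_exp ht]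
  calc mgf X μ t = 1 + (exp t - 1) * μ.real {ω | X ω = 1} := mgf_eq_of_zero_or_one hX h01 t
    _ ≤ (exp t - 1) * q + 1 := by nlinarith
    _ ≤ exp ((exp t - 1) * q) := add_one_le_exp _

theorem measureReal_le_sum_le_exp_of_zero_or_one {ι : Type*} {Y : ι → Ω → ℝ}
    (hmeas : ∀ i, Measurable (Y i)) (hindep : iIndepFun Y μ)
    (h01 : ∀ i ω, Y i ω = 0 ∨ Y i ω = 1) {q : ℝ} (S : Finset ι)
    (hq : ∀ i ∈ S, μ.real {ω | Y i ω = 1} ≤ q) {t : ℝ} (ht : 0 ≤ t) (u : ℝ) :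
    μ.real {ω | u ≤ ∑ i ∈ S, Y i ω} ≤ exp (-t * u + #S * ((exp t - 1) * q)) := by
  have hint := hindep.integrable_exp_mul_sum hmeas (s := S)
    fun i _ ↦ integrable_exp_mul_of_zero_or_one (hmeas i) (h01 i) t
  calc μ.real {ω | u ≤ ∑ i ∈ S, Y i ω}
      ≤ exp (-t * u) * mgf (∑ i ∈ S, Y i) μ t := by
        simpa only [Finset.sum_apply] using measure_ge_le_exp_mul_mgf u ht hint
    _ = exp (-t * u) * ∏ i ∈ S, mgf (Y i) μ t := by rw [hindep.mgf_sum hmeas]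
    _ ≤ exp (-t * u) * ∏ _i ∈ S, exp ((exp t - 1) * q) := by
        gcongr with i hi
        · exact fun i _ ↦ mgf_nonneg
        · exact mgf_le_exp_of_zero_or_one (hmeas i) (h01 i) (hq i hi) ht
    _ = exp (-t * u + #S * ((exp t - 1) * q)) := by
        rw [prod_const, ← exp_nat_mul, ← exp_add]

end ZeroOne

lemma exists_nonneg_neg_mul_add_mul_exp_sub_one_le {N q w u : ℝ} (hN : 0 ≤ N) (hu : 0 ≤ u)
    (hNw : N * w ≤ u) (hwq : exp 3 * q ≤ w) :
    ∃ t, 0 ≤ t ∧ -t * u + N * ((exp t - 1) * q) ≤ -2 * u := by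
  rcases le_or_gt q 0 with hq | hq
  · refine ⟨3, by norm_num, ?_⟩
    have : 0 ≤ exp 3 - 1 := by linarith [one_le_exp (show (0 : ℝ) ≤ 3 by norm_num)]
    nlinarith [mul_nonneg hN (mul_nonneg this (neg_nonneg.2 hq))]
  · have hwq' : exp 3 ≤ w / q := (le_div_iff₀ hq).2 hwq
    have hw : 0 < w := lt_of_lt_of_le (by positivity) hwq
    have ht : 3 ≤ log (w / q) := by simpa using log_le_log (exp_pos 3) hwq'
    refine ⟨log (w / q), by linarith, ?_⟩
    rw [exp_log (div_pos hw hq), sub_one_mul, div_mul_cancel₀ w hq.ne']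
    nlinarith

theorem stmt_11_general
    (Ω : Type) (mΩ : MeasurableSpace Ω) (μ : Measure Ω) [IsProbabilityMeasure μ]
    (n : ℕ) (Y : Fin n × Fin n → Ω → ℝ) (q : ℝ)
    (hmeas : ∀ p, Measurable (Y p))
    (hindep : iIndepFun Y μ)
    (h01 : ∀ p ω, Y p ω = 0 ∨ Y p ω = 1)
    (hq : ∀ p, (μ {ω | Y p ω = 1}).toReal ≤ q)
    (M : Finset (Fin n)) (k : ℕ) (hk : M.card = k)
    (u : ℝ) (hu : 0 < u)
    (hwq : Real.exp 3 * q ≤ 2 * u / ((k : ℝ) * ((k : ℝ) - 1))) :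
    (μ {ω | u ≤ ∑ p ∈ (M ×ˢ M).filter (fun p => p.1 < p.2), Y p ω}).toReal ≤
      Real.exp (-2 * u) := by
  set S := (M ×ˢ M).filter (fun p => p.1 < p.2)
  have hS : (#S : ℝ) = k * (k - 1) / 2 := by
    rw [card_product_filter_lt, hk, Nat.cast_choose_two]
  have hSw : #S * (2 * u / (k * (k - 1))) ≤ u := by
    calc (#S : ℝ) * (2 * u / (k * (k - 1))) = u * ((k * (k - 1)) / (k * (k - 1))) := by
          rw [hS]; ring
      _ ≤ u := mul_le_of_le_one_right hu.le (div_self_le_one _)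
  obtain ⟨t, ht, hexp⟩ :=
    exists_nonneg_neg_mul_add_mul_exp_sub_one_le (Nat.cast_nonneg _) hu.le hSw hwq
  calc μ.real {ω | u ≤ ∑ p ∈ S, Y p ω}
      ≤ exp (-t * u + #S * ((exp t - 1) * q)) :=
        measureReal_le_sum_le_exp_of_zero_or_one hmeas hindep h01 S (fun p _ ↦ hq p) ht u
    _ ≤ exp (-2 * u) := exp_le_exp.2 hexp

/-- Chernoff-type bound for the number of edges inside a vertex subset of a sparse
random graph. -/
theorem stmt_11
    (Ω : Type) (mΩ : MeasurableSpace Ω) (μ : Measure Ω) [IsProbabilityMeasure μ]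
    (n : ℕ) (Y : Fin n × Fin n → Ω → ℝ) (q : ℝ)
    (hmeas : ∀ p, Measurable (Y p))
    (hindep : iIndepFun Y μ)
    (h01 : ∀ p ω, Y p ω = 0 ∨ Y p ω = 1)
    (hq : ∀ p, (μ {ω | Y p ω = 1}).toReal ≤ q)
    (M : Finset (Fin n)) (k : ℕ) (hk : M.card = k) (hk2 : 2 ≤ k)
    (u : ℝ) (hu : 0 < u)
    (hw4 : 2 * u / ((k : ℝ) * ((k : ℝ) - 1)) ≤ 1 / 4)
    (hwq : Real.exp 3 * q ≤ 2 * u / ((k : ℝ) * ((k : ℝ) - 1))) :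
    (μ {ω | u ≤ ∑ p ∈ (M ×ˢ M).filter (fun p => p.1 < p.2), Y p ω}).toReal ≤
      Real.exp (-2 * u) :=
  stmt_11_general Ω mΩ μ n Y q hmeas hindep h01 hq M k hk u hu hwq
end

section
/- For any w ∈ (0, 1/4] and p ∈ (0, 1) with e³·p ≤ w, it holds that -w·log w - (1-w)·log(1-w) + w·log p + (1-w)·log(1-p) ≤ -2w. -/
/-! Split the left side as `w (log p - log w) + (1 - w) (log (1 - p) - log (1 - w))`.
The first term is at most `-3w` because `e³ p ≤ w`, and the second is at most `w - p ≤ w` by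
`log t ≤ t - 1` applied to `t = (1 - p) / (1 - w)`. -/

open Real

lemma mul_log_sub_log_le_sub {x y : ℝ} (hx : 0 < x) (hy : 0 < y) :
    x * (log y - log x) ≤ y - x := by
  have h := log_le_sub_one_of_pos (div_pos hy hx)
  rw [log_div hy.ne' hx.ne', le_sub_iff_add_le, le_div_iff₀ hx] at h
  linarith

lemma log_add_le_log_of_exp_mul_le {a p w : ℝ} (hp : 0 < p) (h : exp a * p ≤ w) :
    log p + a ≤ log w := by
  have := log_le_log (by positivity) h
  rwa [log_mul (exp_pos a).ne' hp.ne', log_exp, add_comm] at this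

/-- Entropy inequality used in Lemma 6: minus the relative entropy of `Bernoulli w`
with respect to `Bernoulli p` is at most `-2w` when `e³ p ≤ w ≤ 1/4`. -/
theorem stmt_12 (w p : ℝ) (hw0 : 0 < w) (hw : w ≤ 1 / 4)
    (hp0 : 0 < p) (hp1 : p < 1) (hpw : Real.exp 3 * p ≤ w) :
    -w * Real.log w - (1 - w) * Real.log (1 - w)
        + w * Real.log p + (1 - w) * Real.log (1 - p) ≤ -2 * w := by
  have hsmall : w * (log p - log w) ≤ -3 * w := by
    have := mul_le_mul_of_nonneg_left
      (sub_nonpos.2 (log_add_le_log_of_exp_mul_le hp0 hpw)) hw0.le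
    linarith
  have hlarge : (1 - w) * (log (1 - p) - log (1 - w)) ≤ w - p :=
    (mul_log_sub_log_le_sub (by linarith) (by linarith)).trans_eq (by ring)
  linarith
end
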